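/- arXiv:1407.4796 — 3 statements merged into one kernel-verified Lean document; each statement's English description precedes it below -/
import Mathlib

section
/- Let G be a strongly connected directed graph on vertex set L, let p', k', i' ∈ L with k' ≠ p', and suppose every directed path from p' to i' passes through k'. Let C(p',k') be the set of all vertices lying on some directed path from p' to k' that does not pass through k' before its endpoint. Then every directed path from a vertex in C(p',k') to i' passes through k', and no directed path from k' to i' that avoids revisiting k' passes through any vertex of C(p',k') other than k' itself. -/
/-- A directed path in the graph `E` from `u` to `v`: a nonempty list of distinct vertices
starting at `u`, ending at `v`, with consecutive vertices joined by edges. A path "passes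
through" a vertex `w` iff `w` is a member of the list. -/
def IsDiPath {V : Type*} (E : V → V → Prop) (l : List V) (u v : V) : Prop :=
  l.Nodup ∧ l.head? = some u ∧ l.getLast? = some v ∧ l.Chain' E

/-- `CSet E p k` : the set of all vertices lying on some directed path from `p` to `k`
that does not pass through `k` before its endpoint. -/
def CSet {V : Type*} (E : V → V → Prop) (p k : V) : Set V :=
  {v | ∃ l : List V, IsDiPath E l p k ∧ k ∉ l.dropLast ∧ v ∈ l}

/-!
If a vertex `v ∈ C(p', k')` other than `k'` had a path to `i'` avoiding `k'`, then prefixing it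
with the initial segment up to `v` of a witnessing `p'`–`k'` path (which avoids `k'`) and
shortcutting repeated vertices would give a `p'`–`i'` path avoiding `k'`. For the second claim,
the tail of a `k'`–`i'` path starting at `v ∈ C(p', k')` must therefore contain `k'` again, which
distinctness of the vertices of a path forbids unless `v = k'`.
-/

namespace IsDiPath

variable {V : Type*} {E : V → V → Prop} {l s t : List V} {u v w : V}

theorem head_mem (h : IsDiPath E l u v) : u ∈ l :=
  List.mem_of_mem_head? h.2.1

theorem exists_eq_cons (h : IsDiPath E l u v) : ∃ t, l = u :: t := by
  obtain ⟨_, hh, -⟩ := h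
  cases l with
  | nil => simp at hh
  | cons a t => exact ⟨t, by simpa using hh⟩

theorem prefix_of_eq_append (h : IsDiPath E (s ++ w :: t) u v) :
    IsDiPath E (s ++ [w]) u w := by
  obtain ⟨hnd, hh, -, hc⟩ := h
  refine ⟨?_, ?_, by simp, hc.prefix ?_⟩
  · exact hnd.sublist ((List.cons_sublist_cons.mpr (List.nil_sublist t)).append_left s)
  · cases s <;> simpa using hh
  · exact ⟨t, by simp⟩

theorem suffix_of_eq_append (h : IsDiPath E (s ++ w :: t) u v) :
    IsDiPath E (w :: t) w v := by
  obtain ⟨hnd, -, hl, hc⟩ := h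
  refine ⟨hnd.sublist (List.sublist_append_right s _), rfl, ?_, hc.suffix ⟨s, rfl⟩⟩
  rwa [List.getLast?_append_of_ne_nil _ (List.cons_ne_nil w t)] at hl

theorem exists_suffix_of_mem (h : IsDiPath E l u v) (hw : w ∈ l) :
    ∃ l', l' <:+ l ∧ IsDiPath E l' w v := by
  obtain ⟨s, t, rfl⟩ := List.append_of_mem hw
  exact ⟨w :: t, ⟨s, rfl⟩, h.suffix_of_eq_append⟩

end IsDiPath

section

variable {V : Type*} {E : V → V → Prop}

theorem exists_isDiPath_subset_of_isChain {l : List V} {u v : V} (hc : l.IsChain E)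
    (hh : l.head? = some u) (hl : l.getLast? = some v) :
    ∃ p, IsDiPath E p u v ∧ p ⊆ l := by
  induction l generalizing u with
  | nil => simp at hh
  | cons a t ih =>
    obtain rfl : a = u := by simpa using hh
    cases t with
    | nil =>
      obtain rfl : a = v := by simpa using hl
      exact ⟨[a], ⟨List.nodup_singleton a, rfl, rfl, List.isChain_singleton a⟩, by simp⟩
    | cons b t =>
      have hab : E a b := (List.isChain_cons_cons.mp hc).1
      obtain ⟨p, hp, hpt⟩ := ih hc.tail rfl (by simpa using hl)
      by_cases hap : a ∈ p
      · obtain ⟨p', hp's, hp'⟩ := hp.exists_suffix_of_mem hap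
        exact ⟨p', hp', fun x hx => List.mem_cons_of_mem a (hpt (hp's.subset hx))⟩
      · obtain ⟨p₀, rfl⟩ := hp.exists_eq_cons
        refine ⟨a :: b :: p₀, ⟨List.nodup_cons.mpr ⟨hap, hp.1⟩, rfl, ?_, ?_⟩, ?_⟩
        · simpa using hp.2.2.1
        · exact List.IsChain.cons_cons hab hp.2.2.2
        · exact List.cons_subset_cons a hpt

theorem IsDiPath.exists_trans {P Q : List V} {u v w : V} (hP : IsDiPath E P u v)
    (hQ : IsDiPath E Q v w) : ∃ R, IsDiPath E R u w ∧ R ⊆ P ++ Q := by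
  obtain ⟨Q', rfl⟩ := hQ.exists_eq_cons
  have hc : (P ++ Q').IsChain E := by
    refine hP.2.2.2.append hQ.2.2.2.tail fun x hx y hy => ?_
    obtain rfl : x = v := by simpa [hP.2.2.1] using hx.symm
    exact List.isChain_cons.mp hQ.2.2.2 |>.1 y hy
  obtain ⟨R, hR, hRsub⟩ := exists_isDiPath_subset_of_isChain (v := w) hc
    (by rw [List.head?_append, hP.2.1]; rfl)
    (by cases Q' <;> simp_all [IsDiPath])
  exact ⟨R, hR, fun x hx => by grind⟩

theorem exists_isDiPath_not_mem_of_mem_CSet {p k v : V} (hv : v ∈ CSet E p k) (hvk : v ≠ k) :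
    ∃ l, IsDiPath E l p v ∧ k ∉ l := by
  obtain ⟨l, hl, hkl, hvl⟩ := hv
  obtain ⟨s, t, rfl⟩ := List.append_of_mem hvl
  refine ⟨s ++ [v], hl.prefix_of_eq_append, fun hk => hkl ?_⟩
  obtain ⟨b, t, rfl⟩ : ∃ b t', t = b :: t' := by
    cases t with
    | nil => exact absurd (by simpa using hl.2.2.1) hvk
    | cons b t' => exact ⟨b, t', rfl⟩
  rw [List.dropLast_append_of_ne_nil (List.cons_ne_nil v _), List.dropLast_cons_cons]
  grind

variable {p k i : V} (hsep : ∀ l, IsDiPath E l p i → k ∈ l)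
include hsep

theorem mem_of_isDiPath_of_mem_CSet {v : V} {l : List V} (hv : v ∈ CSet E p k)
    (hl : IsDiPath E l v i) : k ∈ l := by
  by_cases hvk : v = k
  · exact hvk ▸ hl.head_mem
  obtain ⟨l₀, hl₀, hkl₀⟩ := exists_isDiPath_not_mem_of_mem_CSet hv hvk
  obtain ⟨R, hR, hRsub⟩ := hl₀.exists_trans hl
  simpa [hkl₀] using hRsub (hsep R hR)

theorem eq_of_mem_CSet_of_isDiPath {v : V} {l : List V} (hl : IsDiPath E l k i) (hvl : v ∈ l)
    (hv : v ∈ CSet E p k) : v = k := by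
  obtain ⟨s, t, rfl⟩ := List.append_of_mem hvl
  have hks : k ∈ s ++ [v] := hl.prefix_of_eq_append.head_mem
  have hkt : k ∈ v :: t := mem_of_isDiPath_of_mem_CSet hsep hv hl.suffix_of_eq_append
  have hdisj := (List.nodup_append.mp (by simpa using hl.1 : (s ++ [v] ++ t).Nodup)).2.2
  grind

end

theorem paths_through_kprime_general {V : Type*} (E : V → V → Prop)
    (p' k' i' : V)
    (hmain : ∀ l : List V, IsDiPath E l p' i' → k' ∈ l) :
    (∀ v ∈ CSet E p' k', ∀ l : List V, IsDiPath E l v i' → k' ∈ l) ∧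
    (∀ l : List V, IsDiPath E l k' i' → ∀ v ∈ l, v ∈ CSet E p' k' → v = k') :=
  ⟨fun _ hv _ hl => mem_of_isDiPath_of_mem_CSet hmain hv hl,
    fun _ hl _ hvl hv => eq_of_mem_CSet_of_isDiPath hmain hl hvl hv⟩

/-- Let `G = (L, E)` be strongly connected, `p', k', i' ∈ L` with `k' ≠ p'`,
and suppose every directed path from `p'` to `i'` passes through `k'`. Then every directed
path from a vertex of `C(p',k')` to `i'` passes through `k'`, and no directed path from
`k'` to `i'` (paths have distinct vertices, so `k'` is not revisited) passes through any
vertex of `C(p',k')` other than `k'` itself. -/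
theorem paths_through_kprime {V : Type*} [Fintype V] (E : V → V → Prop)
    (hsc : ∀ u v : V, Relation.ReflTransGen E u v)
    (p' k' i' : V) (hne : k' ≠ p')
    (hmain : ∀ l : List V, IsDiPath E l p' i' → k' ∈ l) :
    (∀ v ∈ CSet E p' k', ∀ l : List V, IsDiPath E l v i' → k' ∈ l) ∧
    (∀ l : List V, IsDiPath E l k' i' → ∀ v ∈ l, v ∈ CSet E p' k' → v = k') :=
  paths_through_kprime_general E p' k' i' hmain
end

section
/- If Ñ(B̃) is a proper translation of N(K) (the complex correspondence h is a bijection between kinetically-relevant complexes), then the generalized mass action system of Ñ with rate constants K̃ = B̃ is dynamically equivalent to the mass action system of N: Σ_{(i,j)∈R} k(i,j) x^{y_i} (y_j - y_i) = Σ_{(i',j')∈R̃} b̃(i',j') x^{(ỹ_K)_{i'}} (ỹ_{j'} - ỹ_{i'}) for all x ∈ ℝ^n_{>0}. -/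
/-- Cast a nonnegative-integer complex vector to a real vector. -/
def castVec {n : ℕ} (v : Fin n → ℕ) : Fin n → ℝ := fun l => (v l : ℝ)

/-- if `Ñ(B̃)` is a proper translation of `N(K)` (the complex correspondence
`h` is a bijection between the kinetically-relevant complexes, with kinetic complexes
`(ỹ_K)_{h i} = y_i`, and the net flux out of each source is preserved:
`Σ_j k(i,j)(y_j - y_i) = Σ_{j'} b̃(h i, j')(ỹ_{j'} - ỹ_{h i})`), then the generalized mass
action system of `Ñ` with rate constants `K̃ = B̃` is dynamically equivalent to the mass
action system of `N`:
`Σ_{(i,j)∈R} k(i,j) x^{y_i} (y_j - y_i) = Σ_{(i',j')∈R̃} b̃(i',j') x^{(ỹ_K)_{i'}} (ỹ_{j'} - ỹ_{i'})`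
for all `x ∈ ℝ^n_{>0}`. -/
theorem proper_translation_dynamically_equivalent (n m : ℕ)
    (y yt yK : Fin m → Fin n → ℕ)
    (R Rt : Finset (Fin m × Fin m))
    (k bt : Fin m × Fin m → ℝ)
    (hkpos : ∀ e ∈ R, 0 < k e) (hk0 : ∀ e ∉ R, k e = 0)
    (hbpos : ∀ e ∈ Rt, 0 < bt e) (hb0 : ∀ e ∉ Rt, bt e = 0)
    (h : Fin m ≃ Fin m)
    (hK : ∀ i, yK (h i) = y i)
    (htrans : ∀ i, ∑ j, k (i, j) • (castVec (y j) - castVec (y i)) =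
        ∑ j', bt (h i, j') • (castVec (yt j') - castVec (yt (h i)))) :
    ∀ x : Fin n → ℝ, (∀ l, 0 < x l) →
      ∑ e ∈ R, (k e * ∏ l, x l ^ y e.1 l) • (castVec (y e.2) - castVec (y e.1)) =
        ∑ e ∈ Rt, (bt e * ∏ l, x l ^ yK e.1 l) • (castVec (yt e.2) - castVec (yt e.1)) := by
  intro x hx
  have expand : ∀ (c : Fin m × Fin m → ℝ) (S : Finset (Fin m × Fin m))
      (hc : ∀ e ∉ S, c e = 0) (w wK : Fin m → Fin n → ℕ),
      ∑ e ∈ S, (c e * ∏ l, x l ^ wK e.1 l) • (castVec (w e.2) - castVec (w e.1)) =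
        ∑ i, (∏ l, x l ^ wK i l) • ∑ j, c (i, j) • (castVec (w j) - castVec (w i)) := by
    intro c S hc w wK
    rw [Finset.sum_subset (Finset.subset_univ S)
      (fun e _ he => by rw [hc e he, zero_mul, zero_smul]),
      Fintype.sum_prod_type]
    refine Finset.sum_congr rfl fun i _ => ?_
    rw [Finset.smul_sum]
    refine Finset.sum_congr rfl fun j _ => ?_
    rw [mul_comm, mul_smul]
  rw [expand k R hk0 y y, expand bt Rt hb0 yt yK]
  rw [← Equiv.sum_comp h fun i => (∏ l, x l ^ yK i l) • ∑ j, bt (i, j) • (castVec (yt j) - castVec (yt i))]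
  refine Finset.sum_congr rfl fun i _ => ?_
  rw [hK, htrans]
end

section
/- If a weighted directed graph is weakly reversible with positive weights b on its edges, then the vector B = (B_1,...,B_m) of tree constants satisfies A(B)·B = 0 componentwise on each linkage class, i.e., the tree constants give a positive element of the kernel of the Kirchhoff matrix (the Matrix-Tree theorem for Laplacian kernels). -/
/-- Undirected connectivity in a directed graph `E`. -/
def UndirConn {V : Type*} (E : V → V → Prop) : V → V → Prop :=
  Relation.ReflTransGen (fun a b => E a b ∨ E b a)

/-- A spanning `i`-tree on the vertex set `U ∋ i` of the directed graph `E`, given by its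
finite edge set: an acyclic spanning subgraph of `U` with unique sink at `i`. -/
def IsSpanningITreeOn {V : Type*} (E : V → V → Prop) (U : Set V) (i : V)
    (T : Finset (V × V)) : Prop :=
  (∀ e ∈ T, E e.1 e.2 ∧ e.1 ∈ U ∧ e.2 ∈ U) ∧
  (∀ a ∈ U, a ≠ i → ∃! b, (a, b) ∈ T) ∧
  (∀ b, (i, b) ∉ T) ∧
  (∀ a ∈ U, Relation.ReflTransGen (fun u v => (u, v) ∈ T) a i)

open scoped Classical in
/-- The tree constant `B_i`, summed over spanning `i`-trees of the vertex set `U` (the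
linkage class of `i`). -/
noncomputable def treeConstantOn {V : Type*} [Fintype V] (E : V → V → Prop)
    (b : V × V → ℝ) (U : Set V) (i : V) : ℝ :=
  ∑ T ∈ Finset.univ.filter (fun T : Finset (V × V) => IsSpanningITreeOn E U i T),
    ∏ e ∈ T, b e

/-- The Kirchhoff matrix: `[A(B)]_{ij} = b(j,i)` for `i ≠ j`, columns summing to zero. -/
def kirchhoff (m : ℕ) (b : Fin m × Fin m → ℝ) : Matrix (Fin m) (Fin m) ℝ :=
  Matrix.of fun i j => if i = j then -∑ l ∈ Finset.univ.erase i, b (i, l) else b (j, i)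

/-! In row `i` of `A(B)·B`, the inflow `∑ⱼ b(j,i) B_j` and the outflow `(∑ₗ b(i,l)) B_i` both
equal the weighted count of the spanning graphs of the linkage class of `i` in which every vertex
has exactly one successor and `i` lies on the cycle. Adding the out-edge `(i,l)` to an `i`-tree,
or the in-edge `(j,i)` to a `j`-tree, produces each such graph exactly once: `l` is the successor
and `j` the predecessor of `i` on the cycle.

Positivity: by weak reversibility every vertex of the class reaches `i`, and choosing for each
vertex a successor closer to `i` gives a spanning `i`-tree. -/

open Finset Relation
open scoped Classical

theorem reflTransGen_eq_of_forall_rel_eq {V : Type*} {r : V → V → Prop} {a x : V}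
    (ha : ∀ c, r a c → c = a) (h : ReflTransGen r a x) : x = a := by
  induction h with
  | refl => rfl
  | tail _ step ih => exact ha _ (ih ▸ step)

theorem reflTransGen_mem_erase_of_target {V : Type*} [DecidableEq V] {F : Finset (V × V)}
    {a t c : V} (h : ReflTransGen (fun u v => (u, v) ∈ F) a t) :
    ReflTransGen (fun u v => (u, v) ∈ F.erase (t, c)) a t := by
  induction h using ReflTransGen.head_induction_on with
  | refl => exact .refl
  | @head x y hxy _ ih =>
    by_cases hx : x = t
    · exact hx ▸ .refl
    · exact ih.head (mem_erase.2 ⟨by simp [hx], hxy⟩)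

theorem UndirConn.symm {V : Type*} {E : V → V → Prop} {u v : V} (h : UndirConn E u v) :
    UndirConn E v u :=
  ReflTransGen.mono (fun _ _ => Or.symm) _ _ (reflTransGen_swap.2 h)

theorem setOf_undirConn_eq {V : Type*} {E : V → V → Prop} {i j : V} (h : UndirConn E j i) :
    {v | UndirConn E v j} = {v | UndirConn E v i} :=
  Set.ext fun _ => ⟨fun hv => hv.trans h, fun hv => hv.trans h.symm⟩

theorem mem_setOf_undirConn_iff_of_adj {V : Type*} {E : V → V → Prop} {i u v : V}
    (huv : E u v) : u ∈ {w | UndirConn E w i} ↔ v ∈ {w | UndirConn E w i} :=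
  ⟨fun hu => ReflTransGen.head (.inr huv) hu, fun hv => ReflTransGen.head (.inl huv) hv⟩

/-- A spanning `i`-tree plus one out-edge of its root; `i` then lies on the unique cycle. -/
structure IsSpanningIUnicyclicOn {V : Type*} (E : V → V → Prop) (U : Set V) (i : V)
    (F : Finset (V × V)) : Prop where
  edge : ∀ e ∈ F, E e.1 e.2 ∧ e.1 ∈ U ∧ e.2 ∈ U
  existsUnique_succ : ∀ a ∈ U, ∃! c, (a, c) ∈ F
  root_loop_not_mem : (i, i) ∉ F
  reach : ∀ a ∈ U, ReflTransGen (fun u v => (u, v) ∈ F) a i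

section Unicyclic

variable {V : Type*} {E : V → V → Prop} {U : Set V} {i j r x : V} {T F : Finset (V × V)}

theorem IsSpanningITreeOn.insert_root [DecidableEq V] (hT : IsSpanningITreeOn E U r T)
    (hr : r ∈ U) (hx : x ∈ U) (hrx : E r x) (hxr : x ≠ r) :
    IsSpanningIUnicyclicOn E U r (insert (r, x) T) := by
  obtain ⟨hedge, hsucc, hroot, hreach⟩ := hT
  refine ⟨?_, fun a ha => ?_, ?_, fun a ha => ?_⟩
  · simp only [mem_insert, forall_eq_or_imp]
    exact ⟨⟨hrx, hr, hx⟩, hedge⟩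
  · by_cases har : a = r
    · subst har
      refine ⟨x, mem_insert_self _ _, fun c hc => ?_⟩
      simpa [hroot c] using hc
    · obtain ⟨c, hc, hcu⟩ := hsucc a ha har
      exact ⟨c, mem_insert_of_mem hc, fun c' hc' => hcu c' (by simpa [har] using hc')⟩
  · simpa [Ne.symm hxr] using hroot r
  · exact ReflTransGen.mono (fun _ _ => mem_insert_of_mem) _ _ (hreach a ha)

namespace IsSpanningIUnicyclicOn

theorem loop_not_mem (hF : IsSpanningIUnicyclicOn E U i F) {a : V} (ha : a ∈ U) :
    (a, a) ∉ F := by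
  intro haa
  have hai : i = a := reflTransGen_eq_of_forall_rel_eq
    (fun c hc => (hF.existsUnique_succ a ha).unique hc haa) (hF.reach a ha)
  exact hF.root_loop_not_mem (hai ▸ haa)

theorem reroot (hF : IsSpanningIUnicyclicOn E U i F) (hj : j ∈ U)
    (hij : ReflTransGen (fun u v => (u, v) ∈ F) i j) : IsSpanningIUnicyclicOn E U j F :=
  ⟨hF.edge, hF.existsUnique_succ, hF.loop_not_mem hj, fun a ha => (hF.reach a ha).trans hij⟩

theorem exists_pred (hF : IsSpanningIUnicyclicOn E U i F) (hi : i ∈ U) :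
    ∃ j, (j, i) ∈ F ∧ ReflTransGen (fun u v => (u, v) ∈ F) i j := by
  obtain ⟨c, hc, -⟩ := hF.existsUnique_succ i hi
  rcases (hF.reach c (hF.edge _ hc).2.2).cases_tail with hci | ⟨j, hcj, hji⟩
  · exact absurd (hci ▸ hc) hF.root_loop_not_mem
  · exact ⟨j, hji, hcj.head hc⟩

theorem pred_unique (hF : IsSpanningIUnicyclicOn E U i F) {j₁ j₂ : V}
    (h₁ : (j₁, i) ∈ F) (hij₁ : ReflTransGen (fun u v => (u, v) ∈ F) i j₁)
    (h₂ : (j₂, i) ∈ F) (hij₂ : ReflTransGen (fun u v => (u, v) ∈ F) i j₂) : j₁ = j₂ := by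
  have : Nonempty V := ⟨i⟩
  choose! f hf using fun a ha => (hF.existsUnique_succ a ha).exists
  have hsucc : ∀ {a c}, (a, c) ∈ F → c = f a := fun h =>
    (hF.existsUnique_succ _ (hF.edge _ h).2.1).unique h (hf _ (hF.edge _ h).2.1)
  have hiter : ∀ {j}, ReflTransGen (fun u v => (u, v) ∈ F) i j → ∃ p, f^[p] i = j := by
    intro j h
    induction h with
    | refl => exact ⟨0, rfl⟩
    | tail _ hjk ih =>
      obtain ⟨p, rfl⟩ := ih
      exact ⟨p + 1, by rw [Function.iterate_succ_apply', hsucc hjk]⟩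
  obtain ⟨p, rfl⟩ := hiter hij₁
  obtain ⟨q, rfl⟩ := hiter hij₂
  have hp : f^[p + 1] i = i := by rw [Function.iterate_succ_apply', ← hsucc h₁]
  have hq : f^[q + 1] i = i := by rw [Function.iterate_succ_apply', ← hsucc h₂]
  calc f^[p] i = f^[p] (f^[q + 1] i) := by rw [hq]
    _ = f^[q] (f^[p + 1] i) := by
      rw [← Function.iterate_add_apply, ← Function.iterate_add_apply, Nat.add_left_comm]
    _ = f^[q] i := by rw [hp]

theorem erase_root [DecidableEq V] (hF : IsSpanningIUnicyclicOn E U r F) (hx : (r, x) ∈ F) :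
    IsSpanningITreeOn E U r (F.erase (r, x)) := by
  have hr : r ∈ U := (hF.edge _ hx).2.1
  refine ⟨fun e he => hF.edge e (mem_of_mem_erase he), fun a ha har => ?_, fun c hc => ?_,
    fun a ha => reflTransGen_mem_erase_of_target (hF.reach a ha)⟩
  · obtain ⟨c, hc, hcu⟩ := hF.existsUnique_succ a ha
    exact ⟨c, mem_erase.2 ⟨by simp [har], hc⟩, fun c' hc' => hcu c' (mem_of_mem_erase hc')⟩
  · obtain ⟨hne, hc⟩ := mem_erase.1 hc
    exact hne (by rw [(hF.existsUnique_succ r hr).unique hc hx])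

end IsSpanningIUnicyclicOn

end Unicyclic

section TreeConstant

variable {V : Type*} [Fintype V] [DecidableEq V] {b : V × V → ℝ} {U : Set V} {i : V}

theorem sum_outWeight_mul_treeConstantOn_eq_sum_unicyclic (hb : ∀ e, 0 ≤ b e) (hi : i ∈ U)
    (hU : ∀ l, 0 < b (i, l) → l ∈ U) :
    (∑ l ∈ univ.erase i, b (i, l)) * treeConstantOn (fun u v => 0 < b (u, v)) b U i =
      ∑ F ∈ univ.filter (IsSpanningIUnicyclicOn (fun u v => 0 < b (u, v)) U i),
        ∏ e ∈ F, b e := by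
  rw [sum_mul, ← sum_filter_of_ne fun l _ h => (hb _).lt_of_ne' (left_ne_zero_of_mul h)]
  simp only [treeConstantOn, mul_sum]
  rw [sum_sigma']
  refine sum_bij (fun p _ => insert (i, p.1) p.2) ?_ ?_ ?_ ?_
  · rintro ⟨l, T⟩ hp
    simp only [mem_sigma, mem_filter, mem_erase, mem_univ, and_true, true_and] at hp ⊢
    exact hp.2.insert_root hi (hU l hp.1.2) hp.1.2 hp.1.1
  · rintro ⟨l₁, T₁⟩ hp₁ ⟨l₂, T₂⟩ hp₂ heq
    simp only [mem_sigma, mem_filter, mem_univ, true_and] at hp₁ hp₂ heq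
    have hl : l₂ = l₁ := by
      have h : (i, l₂) ∈ insert (i, l₁) T₁ := by rw [heq]; exact mem_insert_self _ _
      simpa [hp₁.2.2.2.1 l₂] using h
    subst hl
    rw [← erase_insert (hp₁.2.2.2.1 l₂), heq, erase_insert (hp₂.2.2.2.1 l₂)]
  · intro F hF
    have hF := (mem_filter.1 hF).2
    obtain ⟨l, hl, -⟩ := hF.existsUnique_succ i hi
    refine ⟨⟨l, F.erase (i, l)⟩, ?_, insert_erase hl⟩
    simp only [mem_sigma, mem_filter, mem_erase, mem_univ, and_true, true_and]
    exact ⟨⟨fun hli => hF.root_loop_not_mem (hli ▸ hl), (hF.edge _ hl).1⟩, hF.erase_root hl⟩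
  · rintro ⟨l, T⟩ hp
    simp only [mem_sigma, mem_filter, mem_univ, true_and] at hp
    rw [prod_insert (hp.2.2.2.1 l)]

theorem sum_inWeight_mul_treeConstantOn_eq_sum_unicyclic (hb : ∀ e, 0 ≤ b e) (hi : i ∈ U)
    (hU : ∀ j, 0 < b (j, i) → j ∈ U) :
    ∑ j ∈ univ.erase i, b (j, i) * treeConstantOn (fun u v => 0 < b (u, v)) b U j =
      ∑ F ∈ univ.filter (IsSpanningIUnicyclicOn (fun u v => 0 < b (u, v)) U i),
        ∏ e ∈ F, b e := by
  rw [← sum_filter_of_ne fun j _ h => (hb _).lt_of_ne' (left_ne_zero_of_mul h)]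
  simp only [treeConstantOn, mul_sum]
  rw [sum_sigma']
  have hins : ∀ {j T}, 0 < b (j, i) → j ≠ i →
      IsSpanningITreeOn (fun u v => 0 < b (u, v)) U j T →
      IsSpanningIUnicyclicOn (fun u v => 0 < b (u, v)) U i (insert (j, i) T) := fun hji hj hT =>
    (hT.insert_root (hU _ hji) hi hji (Ne.symm hj)).reroot hi (.single (mem_insert_self _ _))
  have hreach : ∀ {j T}, IsSpanningITreeOn (fun u v => 0 < b (u, v)) U j T →
      ReflTransGen (fun u v => (u, v) ∈ insert (j, i) T) i j := fun hT =>
    ReflTransGen.mono (fun _ _ => mem_insert_of_mem) _ _ (hT.2.2.2 i hi)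
  refine sum_bij (fun p _ => insert (p.1, i) p.2) ?_ ?_ ?_ ?_
  · rintro ⟨j, T⟩ hp
    simp only [mem_sigma, mem_filter, mem_erase, mem_univ, and_true, true_and] at hp ⊢
    exact hins hp.1.2 hp.1.1 hp.2
  · rintro ⟨j₁, T₁⟩ hp₁ ⟨j₂, T₂⟩ hp₂ heq
    simp only [mem_sigma, mem_filter, mem_erase, mem_univ, and_true, true_and] at hp₁ hp₂ heq
    have hj : j₁ = j₂ := (hins hp₁.1.2 hp₁.1.1 hp₁.2).pred_unique (mem_insert_self _ _)
      (hreach hp₁.2) (heq ▸ mem_insert_self _ _) (heq ▸ hreach hp₂.2)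
    subst hj
    rw [← erase_insert (hp₁.2.2.2.1 i), heq, erase_insert (hp₂.2.2.2.1 i)]
  · intro F hF
    have hF := (mem_filter.1 hF).2
    obtain ⟨j, hj, hij⟩ := hF.exists_pred hi
    have hjU : j ∈ U := (hF.edge _ hj).2.1
    refine ⟨⟨j, F.erase (j, i)⟩, ?_, insert_erase hj⟩
    simp only [mem_sigma, mem_filter, mem_erase, mem_univ, and_true, true_and]
    exact ⟨⟨fun hji => hF.root_loop_not_mem (hji ▸ hj), (hF.edge _ hj).1⟩,
      (hF.reroot hjU hij).erase_root hj⟩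
  · rintro ⟨j, T⟩ hp
    simp only [mem_sigma, mem_filter, mem_univ, true_and] at hp
    rw [prod_insert (hp.2.2.2.1 i)]

end TreeConstant

section SpanningTree

variable {V : Type*} {E : V → V → Prop} {U : Set V} {i : V}

theorem exists_isSpanningITreeOn_of_descent [Fintype V] (d : V → ℕ)
    (hd : ∀ a ∈ U, a ≠ i → ∃ c, E a c ∧ c ∈ U ∧ d c < d a) :
    ∃ T, IsSpanningITreeOn E U i T := by
  rcases isEmpty_or_nonempty V with hV | hV
  · exact ⟨∅, by simp [IsSpanningITreeOn]⟩
  choose! nxt hE hU hlt using hd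
  have hmem : ∀ {a}, a ∈ U → a ≠ i →
      (a, nxt a) ∈ (univ.filter (fun a => a ∈ U ∧ a ≠ i)).image (fun a => (a, nxt a)) :=
    fun ha hai => mem_image_of_mem _ (mem_filter.2 ⟨mem_univ _, ha, hai⟩)
  refine ⟨(univ.filter (fun a => a ∈ U ∧ a ≠ i)).image (fun a => (a, nxt a)), ?_, ?_, ?_, ?_⟩
  · simp only [mem_image, mem_filter, mem_univ, true_and]
    rintro _ ⟨a, ⟨ha, hai⟩, rfl⟩
    exact ⟨hE a ha hai, ha, hU a ha hai⟩
  · refine fun a ha hai => ⟨nxt a, hmem ha hai, fun c hc => ?_⟩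
    simp only [mem_image, Prod.mk.injEq] at hc
    obtain ⟨a, -, rfl, rfl⟩ := hc
    rfl
  · simp
  · intro a ha
    induction hda : d a using Nat.strong_induction_on generalizing a with
    | _ n ih =>
      by_cases hai : a = i
      · exact hai ▸ .refl
      · exact .head (hmem ha hai) (ih _ (hda ▸ hlt a ha hai) _ (hU a ha hai) rfl)

def ReachesWithin (E : V → V → Prop) (i : V) : ℕ → V → Prop
  | 0, a => a = i
  | n + 1, a => a = i ∨ ∃ c, E a c ∧ ReachesWithin E i n c

theorem exists_reachesWithin {a : V} (h : ReflTransGen E a i) : ∃ n, ReachesWithin E i n a := by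
  induction h using ReflTransGen.head_induction_on with
  | refl => exact ⟨0, rfl⟩
  | head hac _ ih =>
    obtain ⟨n, hn⟩ := ih
    exact ⟨n + 1, .inr ⟨_, hac, hn⟩⟩

theorem exists_isSpanningITreeOn [Fintype V] (hU : ∀ u v, E u v → u ∈ U → v ∈ U)
    (hreach : ∀ a ∈ U, ReflTransGen E a i) : ∃ T, IsSpanningITreeOn E U i T := by
  let d : V → ℕ := fun a => if h : ∃ n, ReachesWithin E i n a then Nat.find h else 0
  refine exists_isSpanningITreeOn_of_descent d fun a ha hai => ?_
  have h : ∃ n, ReachesWithin E i n a := exists_reachesWithin (hreach a ha)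
  have hspec := Nat.find_spec h
  have hda : d a = Nat.find h := dif_pos h
  cases hn : Nat.find h with
  | zero => rw [hn] at hspec; exact absurd hspec hai
  | succ k =>
    rw [hn] at hspec
    obtain hai' | ⟨c, hac, hc⟩ := hspec
    · exact absurd hai' hai
    · have hdc : d c ≤ k := by
        rw [show d c = _ from dif_pos ⟨k, hc⟩]
        exact Nat.find_le hc
      exact ⟨c, hac, hU a c hac ha, by omega⟩

end SpanningTree

theorem treeConstantOn_pos {V : Type*} [Fintype V] {E : V → V → Prop} {b : V × V → ℝ}
    {U : Set V} {i : V} (hb : ∀ u v, E u v → 0 < b (u, v))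
    (hT : ∃ T, IsSpanningITreeOn E U i T) : 0 < treeConstantOn E b U i := by
  obtain ⟨T, hT⟩ := hT
  refine sum_pos (fun T' hT' => prod_pos fun e he => ?_) ⟨T, mem_filter.2 ⟨mem_univ _, hT⟩⟩
  exact hb _ _ ((mem_filter.1 hT').2.1 e he).1

theorem kirchhoff_mulVec_apply (m : ℕ) (b : Fin m × Fin m → ℝ) (x : Fin m → ℝ) (i : Fin m) :
    (kirchhoff m b).mulVec x i =
      ∑ j ∈ univ.erase i, b (j, i) * x j - (∑ l ∈ univ.erase i, b (i, l)) * x i := by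
  have hdiag : kirchhoff m b i i = -∑ l ∈ univ.erase i, b (i, l) := by simp [kirchhoff]
  have hoff : ∀ j ∈ univ.erase i, kirchhoff m b i j * x j = b (j, i) * x j := fun j hj => by
    rw [kirchhoff, Matrix.of_apply, if_neg (ne_of_mem_erase hj).symm]
  rw [show (kirchhoff m b).mulVec x i = ∑ j, kirchhoff m b i j * x j from rfl,
    ← add_sum_erase _ _ (mem_univ i), hdiag, sum_congr rfl hoff]
  ring

/-- Matrix-Tree theorem for Laplacian kernels: if the weighted directed
graph on `{1,…,m}` with edges where `b > 0` is weakly reversible, then the vector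
`B = (B_1,…,B_m)` of tree constants (each computed on its linkage class) satisfies
`A(B)·B = 0`, giving a positive element of the kernel of the Kirchhoff matrix. -/
theorem matrix_tree_kernel (m : ℕ) (b : Fin m × Fin m → ℝ)
    (hb : ∀ e, 0 ≤ b e)
    (hwr : ∀ u v : Fin m,
      UndirConn (fun i j => 0 < b (i, j)) u v →
      Relation.ReflTransGen (fun i j => 0 < b (i, j)) u v) :
    (kirchhoff m b).mulVec
        (fun i => treeConstantOn (fun i j => 0 < b (i, j)) b
          {v | UndirConn (fun i j => 0 < b (i, j)) v i} i) = 0 ∧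
    (∀ i, 0 < treeConstantOn (fun i j => 0 < b (i, j)) b
        {v | UndirConn (fun i j => 0 < b (i, j)) v i} i) := by
  set E : Fin m → Fin m → Prop := fun i j => 0 < b (i, j)
  have hadj : ∀ {i u v}, E u v → (u ∈ {w | UndirConn E w i} ↔ v ∈ {w | UndirConn E w i}) :=
    mem_setOf_undirConn_iff_of_adj
  refine ⟨funext fun i => ?_, fun i => ?_⟩
  · have hrow : ∀ j ∈ univ.erase i, b (j, i) * treeConstantOn E b {v | UndirConn E v j} j =
        b (j, i) * treeConstantOn E b {v | UndirConn E v i} j := by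
      intro j _
      rcases (hb (j, i)).eq_or_lt with h | h
      · rw [← h, zero_mul, zero_mul]
      · rw [setOf_undirConn_eq (E := E) (.single (.inl h))]
    rw [kirchhoff_mulVec_apply, sum_congr rfl hrow,
      sum_inWeight_mul_treeConstantOn_eq_sum_unicyclic hb .refl fun j h => (hadj h).2 .refl,
      sum_outWeight_mul_treeConstantOn_eq_sum_unicyclic hb .refl fun l h => (hadj h).1 .refl,
      sub_self, Pi.zero_apply]
  · exact treeConstantOn_pos (fun _ _ h => h) (exists_isSpanningITreeOn
      (fun u v h => (hadj h).1) fun a ha => hwr a i ha)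
end
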